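/- Let B ⊆ P be a coalgebra-Galois C-extension with canonical entwining ψ and translation map τ(c) = c^[1] ⊗_B c^[2]. Then the assignments Π ↦ ω_Π with ω_Π(c) = c^[1] Π(d c^[2]), and ω ↦ Π^ω with Π^ω(p d p') = p p'₍₀₎ ω(p'₍₁₎), define mutually inverse bijections between the set of connections Π and the set of connection forms ω on the extension B ⊆ P. -/
import Mathlib


/-!
STATEMENT 18. For a coalgebra-Galois C-extension B ⊆ P with canonical
entwining ψ and translation map τ, the assignments Pr ↦ ω_Pr,
ω_Pr(c) = c^[1] Pr(d c^[2]), and ω ↦ Pr^ω, Pr^ω(p d p') = p p'₍₀₎ ω(p'₍₁₎), are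
mutually inverse bijections between connections and connection forms.
-/

open TensorProduct LinearMap

noncomputable section

namespace CGal

variable {k : Type*} [Field k]
variable {P C : Type*} [Ring P] [Algebra k P]
  [AddCommGroup C] [Module k C] [Coalgebra k C]

/-- The coaction invariants `P^{coC}`. -/
def coinv (δ : P →ₗ[k] P ⊗[k] C) : Set P :=
  {b : P | ∀ p : P, δ (b * p) = b • δ p}

/-- `δ` is a (counital, coassociative) right `C`-coaction on `P`. -/
def IsCoaction (δ : P →ₗ[k] P ⊗[k] C) : Prop :=
  (∀ p : P, (TensorProduct.rid k P) ((lTensor P (Coalgebra.counit : C →ₗ[k] k)) (δ p)) = p) ∧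
  (∀ p : P, (rTensor C δ) (δ p)
      = (TensorProduct.assoc k P C C).symm
          ((lTensor P (Coalgebra.comul : C →ₗ[k] C ⊗[k] C)) (δ p)))

/-- The kernel of `P ⊗ P → P ⊗_B P` (that is, `P(Ω¹B)P`) for `B = P^{coC}`. -/
def galRel (δ : P →ₗ[k] P ⊗[k] C) : Submodule k (P ⊗[k] P) :=
  Submodule.span k
    {x | ∃ p b p', b ∈ coinv δ ∧ x = (p * b) ⊗ₜ[k] p' - p ⊗ₜ[k] (b * p')}

/-- The lifted canonical map `~can : P ⊗ P → P ⊗ C`. -/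
def canLift (δ : P →ₗ[k] P ⊗[k] C) : P ⊗[k] P →ₗ[k] P ⊗[k] C :=
  (TensorProduct.map (LinearMap.mul' k P) LinearMap.id)
    ∘ₗ (TensorProduct.assoc k P P C).symm.toLinearMap
    ∘ₗ (lTensor P δ)

/-- The extension `P^{coC} ⊆ P` is coalgebra-Galois. -/
def IsCGalois (δ : P →ₗ[k] P ⊗[k] C) : Prop :=
  Function.Surjective (canLift δ) ∧ LinearMap.ker (canLift δ) = galRel δ

/-- The bow-tie axioms of an entwining structure `(P, C, ψ)`. -/
def IsEntwining (ψ : C ⊗[k] P →ₗ[k] P ⊗[k] C) : Prop :=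
  (ψ ∘ₗ (lTensor C (LinearMap.mul' k P))
     = (rTensor C (LinearMap.mul' k P))
        ∘ₗ (TensorProduct.assoc k P P C).symm.toLinearMap
        ∘ₗ (lTensor P ψ)
        ∘ₗ (TensorProduct.assoc k P C P).toLinearMap
        ∘ₗ (rTensor P ψ)
        ∘ₗ (TensorProduct.assoc k C P P).symm.toLinearMap) ∧
  (∀ c : C, ψ (c ⊗ₜ[k] (1 : P)) = (1 : P) ⊗ₜ[k] c) ∧
  ((lTensor P (Coalgebra.comul : C →ₗ[k] C ⊗[k] C)) ∘ₗ ψ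
     = (TensorProduct.assoc k P C C).toLinearMap
        ∘ₗ (rTensor C ψ)
        ∘ₗ (TensorProduct.assoc k C P C).symm.toLinearMap
        ∘ₗ (lTensor C ψ)
        ∘ₗ (TensorProduct.assoc k C C P).toLinearMap
        ∘ₗ (rTensor P (Coalgebra.comul : C →ₗ[k] C ⊗[k] C))) ∧
  ((TensorProduct.rid k P).toLinearMap
      ∘ₗ (lTensor P (Coalgebra.counit : C →ₗ[k] k)) ∘ₗ ψ
     = (TensorProduct.lid k P).toLinearMap
      ∘ₗ (rTensor P (Coalgebra.counit : C →ₗ[k] k)))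

/-- `P` is an entwined module in `M_P^C(ψ)`. -/
def IsEntwinedOn (δ : P →ₗ[k] P ⊗[k] C) (ψ : C ⊗[k] P →ₗ[k] P ⊗[k] C) : Prop :=
  ∀ m p : P,
    δ (m * p)
      = ((rTensor C (LinearMap.mul' k P))
          ∘ₗ (TensorProduct.assoc k P P C).symm.toLinearMap
          ∘ₗ (lTensor P ψ)
          ∘ₗ (TensorProduct.assoc k P C P).toLinearMap)
        ((δ m) ⊗ₜ[k] p)

/-- The diagonal coaction `Δ_{P⊗P} : p ⊗ p' ↦ p₍₀₎ ⊗ ψ(p₍₁₎ ⊗ p')`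
(restricting to `Δ_{Ω¹P}`). -/
def deltaPP (δ : P →ₗ[k] P ⊗[k] C) (ψ : C ⊗[k] P →ₗ[k] P ⊗[k] C) :
    P ⊗[k] P →ₗ[k] (P ⊗[k] P) ⊗[k] C :=
  (TensorProduct.assoc k P P C).symm.toLinearMap
    ∘ₗ (lTensor P ψ)
    ∘ₗ (TensorProduct.assoc k P C P).toLinearMap
    ∘ₗ (rTensor P δ)

/-- `Ω¹P = Ker(P ⊗ P → P)`, the universal differential 1-forms. -/
def univForms : Submodule k (P ⊗[k] P) := LinearMap.ker (LinearMap.mul' k P)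

/-- The universal differential `d p = 1 ⊗ p - p ⊗ 1`. -/
def dmap : P →ₗ[k] P ⊗[k] P :=
  ((TensorProduct.mk k P P) 1) - ((TensorProduct.mk k P P).flip 1)

/-- The universal differential, corestricted to `Ω¹P`. -/
def dOmega : P →ₗ[k] ↥(univForms (k := k) (P := P)) :=
  LinearMap.codRestrict univForms dmap (by
    intro p
    simp [univForms, dmap, LinearMap.mem_ker, TensorProduct.mk_apply])

/-- `p ⊗ (q ⊗ r) ↦ (pq) ⊗ r`. -/
def mulFst : P ⊗[k] (P ⊗[k] P) →ₗ[k] P ⊗[k] P :=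
  (rTensor P (LinearMap.mul' k P)) ∘ₗ (TensorProduct.assoc k P P P).symm.toLinearMap

/-- A connection: a left `P`-linear projection `Pr : Ω¹P → Ω¹P` with kernel
`P(Ω¹B)P` such that `Pr ∘ d` is right `C`-colinear. -/
def IsConnection (δ : P →ₗ[k] P ⊗[k] C) (ψ : C ⊗[k] P →ₗ[k] P ⊗[k] C)
    (Pr : ↥(univForms (k := k) (P := P)) →ₗ[k] ↥(univForms (k := k) (P := P))) :
    Prop :=
  (∀ (p : P) (x y : ↥(univForms (k := k) (P := P))),
      (y : P ⊗[k] P) = p • (x : P ⊗[k] P) →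
      ((Pr y : ↥(univForms (k := k) (P := P))) : P ⊗[k] P)
        = p • ((Pr x : ↥(univForms (k := k) (P := P))) : P ⊗[k] P)) ∧
  (Pr ∘ₗ Pr = Pr) ∧
  (∀ x : ↥(univForms (k := k) (P := P)),
      Pr x = 0 ↔ (x : P ⊗[k] P) ∈ galRel δ) ∧
  (∀ p : P,
      deltaPP δ ψ ((Pr (dOmega p) : ↥(univForms (k := k) (P := P))) : P ⊗[k] P)
        = (rTensor C ((univForms (k := k) (P := P)).subtype ∘ₗ Pr ∘ₗ dOmega))
            (δ p))

/-- A connection form `ω : C → Ω¹P`. -/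
def IsConnectionForm (δ : P →ₗ[k] P ⊗[k] C) (ψ : C ⊗[k] P →ₗ[k] P ⊗[k] C)
    (ω : C →ₗ[k] P ⊗[k] P) : Prop :=
  (∀ c : C, ω c ∈ univForms (k := k) (P := P)) ∧
  -- (i)  1₍₀₎ ω(1₍₁₎) = 0 :
  (mulFst ((lTensor P ω) (δ 1)) = 0) ∧
  -- (ii)  ~can(ω(c)) = 1 ⊗ c - ε(c) Δ_P(1) :
  (∀ c : C, canLift δ (ω c)
      = (1 : P) ⊗ₜ[k] c - ((Coalgebra.counit : C →ₗ[k] k) c) • δ 1) ∧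
  -- (iii)  (id ⊗ ψ)(ψ ⊗ id)(id ⊗ ω)Δ = (ω ⊗ id)Δ :
  ((TensorProduct.assoc k P P C).symm.toLinearMap
      ∘ₗ (lTensor P ψ)
      ∘ₗ (TensorProduct.assoc k P C P).toLinearMap
      ∘ₗ (rTensor P ψ)
      ∘ₗ (TensorProduct.assoc k C P P).symm.toLinearMap
      ∘ₗ (lTensor C ω)
      ∘ₗ (Coalgebra.comul : C →ₗ[k] C ⊗[k] C)
    = (rTensor C ω) ∘ₗ (Coalgebra.comul : C →ₗ[k] C ⊗[k] C))

/-- The connection associated to a connection form: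
`Pr^ω(p d p') = p p'₍₀₎ ω(p'₍₁₎)`. -/
def piOf (δ : P →ₗ[k] P ⊗[k] C) (ω : C →ₗ[k] P ⊗[k] P) :
    P ⊗[k] P →ₗ[k] P ⊗[k] P :=
  mulFst ∘ₗ (lTensor P ω) ∘ₗ canLift δ

/-! ### Auxiliary lemmas -/

section Aux

lemma smul_tmul_left {N : Type*} [AddCommGroup N] [Module k N] (p a : P) (t : N) :
    p • (a ⊗ₜ[k] t) = (p * a) ⊗ₜ[k] t := by
  rw [TensorProduct.smul_tmul', smul_eq_mul]

lemma rmul_assoc_symm {N : Type*} [AddCommGroup N] [Module k N] (p : P) (t : P ⊗[k] N) :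
    (TensorProduct.map (LinearMap.mul' k P) (LinearMap.id : N →ₗ[k] N))
      ((TensorProduct.assoc k P P N).symm (p ⊗ₜ[k] t)) = p • t := by
  induction t using TensorProduct.induction_on with
  | zero => simp
  | tmul a n => simp [TensorProduct.assoc_symm_tmul, smul_tmul_left]
  | add x y hx hy => simp only [tmul_add, map_add, hx, hy, smul_add]

lemma rmul_assoc_symm' {N : Type*} [AddCommGroup N] [Module k N] (p : P) (t : P ⊗[k] N) :
    (LinearMap.rTensor N (LinearMap.mul' k P))
      ((TensorProduct.assoc k P P N).symm (p ⊗ₜ[k] t)) = p • t :=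
  rmul_assoc_symm p t

lemma lTensor_smul' {M N : Type*} [AddCommGroup M] [Module k M] [AddCommGroup N] [Module k N]
    (f : M →ₗ[k] N) (p : P) (y : P ⊗[k] M) :
    LinearMap.lTensor P f (p • y) = p • LinearMap.lTensor P f y := by
  induction y using TensorProduct.induction_on with
  | zero => simp
  | tmul a m => simp [smul_tmul_left]
  | add x y hx hy => simp only [smul_add, map_add, hx, hy]

variable (δ : P →ₗ[k] P ⊗[k] C) (ω : C →ₗ[k] P ⊗[k] P)

lemma mulFst_tmul (p : P) (y : P ⊗[k] P) :
    (mulFst : P ⊗[k] (P ⊗[k] P) →ₗ[k] P ⊗[k] P) (p ⊗ₜ[k] y) = p • y := by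
  simpa [mulFst] using rmul_assoc_symm' (k := k) p y

lemma canLift_tmul (a b : P) : canLift δ (a ⊗ₜ[k] b) = a • δ b := by
  simpa [canLift] using rmul_assoc_symm (k := k) a (δ b)

lemma canLift_smul (p : P) (z : P ⊗[k] P) :
    canLift δ (p • z) = p • canLift δ z := by
  induction z using TensorProduct.induction_on with
  | zero => simp
  | tmul a b => rw [smul_tmul_left, canLift_tmul, canLift_tmul, mul_smul]
  | add x y hx hy => simp only [smul_add, map_add, hx, hy]

lemma mulFst_smul (p : P) (w : P ⊗[k] (P ⊗[k] P)) :
    (mulFst : P ⊗[k] (P ⊗[k] P) →ₗ[k] P ⊗[k] P) (p • w) = p • mulFst w := by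
  induction w using TensorProduct.induction_on with
  | zero => simp
  | tmul a y => rw [smul_tmul_left, mulFst_tmul, mulFst_tmul, mul_smul]
  | add x y hx hy => simp only [smul_add, map_add, hx, hy]

lemma mul'_smul (p : P) (y : P ⊗[k] P) :
    LinearMap.mul' k P (p • y) = p * LinearMap.mul' k P y := by
  induction y using TensorProduct.induction_on with
  | zero => simp
  | tmul a b => rw [smul_tmul_left]; simp [mul_assoc]
  | add x y hx hy => simp only [smul_add, map_add, hx, hy, mul_add]

lemma rid_smul (p : P) (x : P ⊗[k] k) :
    (TensorProduct.rid k P) (p • x) = p * (TensorProduct.rid k P) x := by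
  induction x using TensorProduct.induction_on with
  | zero => simp
  | tmul a s => rw [smul_tmul_left]; simp [Algebra.mul_smul_comm]
  | add x y hx hy => simp only [smul_add, map_add, hx, hy, mul_add]

lemma piOf_apply (z : P ⊗[k] P) :
    piOf δ ω z = mulFst (LinearMap.lTensor P ω (canLift δ z)) := rfl

lemma piOf_smul (p : P) (z : P ⊗[k] P) :
    piOf δ ω (p • z) = p • piOf δ ω z := by
  rw [piOf_apply, piOf_apply, canLift_smul, lTensor_smul', mulFst_smul]

end Aux

section Aux2
set_option linter.unusedSectionVars false

variable (δ : P →ₗ[k] P ⊗[k] C) (ω : C →ₗ[k] P ⊗[k] P)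

lemma counit_canLift
    (hδ1 : ∀ p : P, (TensorProduct.rid k P)
      ((lTensor P (Coalgebra.counit : C →ₗ[k] k)) (δ p)) = p) (z : P ⊗[k] P) :
    (TensorProduct.rid k P) ((lTensor P (Coalgebra.counit : C →ₗ[k] k)) (canLift δ z))
      = LinearMap.mul' k P z := by
  induction z using TensorProduct.induction_on with
  | zero => simp
  | tmul a b => rw [canLift_tmul, lTensor_smul', rid_smul, hδ1]; simp
  | add x y hx hy => simp only [map_add, hx, hy]

lemma canLift_mulFst_lTensor
    (hω2 : ∀ c : C, canLift δ (ω c)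
        = (1:P) ⊗ₜ[k] c - ((Coalgebra.counit : C →ₗ[k] k) c) • δ 1) (t : P ⊗[k] C) :
    canLift δ (mulFst (lTensor P ω t))
      = t - ((TensorProduct.rid k P) ((lTensor P (Coalgebra.counit : C →ₗ[k] k)) t)) • δ 1 := by
  induction t using TensorProduct.induction_on with
  | zero => simp
  | tmul p c =>
      rw [lTensor_tmul, mulFst_tmul, canLift_smul, hω2, smul_sub, smul_tmul_left, mul_one,
        lTensor_tmul, TensorProduct.rid_tmul, smul_comm, smul_assoc]
  | add x y hx hy =>
      simp only [map_add, hx, hy, add_smul]; abel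

lemma canLift_piOf
    (hδ1 : ∀ p : P, (TensorProduct.rid k P)
      ((lTensor P (Coalgebra.counit : C →ₗ[k] k)) (δ p)) = p)
    (hω2 : ∀ c : C, canLift δ (ω c)
        = (1:P) ⊗ₜ[k] c - ((Coalgebra.counit : C →ₗ[k] k) c) • δ 1) (z : P ⊗[k] P) :
    canLift δ (piOf δ ω z) = canLift δ z - (LinearMap.mul' k P z) • δ 1 := by
  rw [piOf_apply, canLift_mulFst_lTensor δ ω hω2, counit_canLift δ hδ1]

lemma mul'_mulFst_lTensor (hω0 : ∀ c : C, ω c ∈ univForms (k := k) (P := P)) (t : P ⊗[k] C) :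
    LinearMap.mul' k P (mulFst (lTensor P ω t)) = 0 := by
  induction t using TensorProduct.induction_on with
  | zero => simp
  | tmul p c =>
      rw [lTensor_tmul, mulFst_tmul, mul'_smul,
        LinearMap.mem_ker.mp (hω0 c), mul_zero]
  | add x y hx hy => simp only [map_add, hx, hy, add_zero]

lemma mul'_piOf (hω0 : ∀ c : C, ω c ∈ univForms (k := k) (P := P)) (z : P ⊗[k] P) :
    LinearMap.mul' k P (piOf δ ω z) = 0 :=
  mul'_mulFst_lTensor ω hω0 _

end Aux2
section Aux3
set_option linter.unusedSectionVars false

/-- The double-`ψ` map appearing in condition (iii) of a connection form. -/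
def Xi (ψ : C ⊗[k] P →ₗ[k] P ⊗[k] C) :
    C ⊗[k] (P ⊗[k] P) →ₗ[k] (P ⊗[k] P) ⊗[k] C :=
  (TensorProduct.assoc k P P C).symm.toLinearMap
    ∘ₗ (lTensor P ψ)
    ∘ₗ (TensorProduct.assoc k P C P).toLinearMap
    ∘ₗ (rTensor P ψ)
    ∘ₗ (TensorProduct.assoc k C P P).symm.toLinearMap

/-- Multiply an outer `P`-factor into the first leg. -/
def M3 : P ⊗[k] ((P ⊗[k] P) ⊗[k] C) →ₗ[k] (P ⊗[k] P) ⊗[k] C :=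
  (rTensor C (mulFst (k := k) (P := P)))
    ∘ₗ (TensorProduct.assoc k P (P ⊗[k] P) C).symm.toLinearMap

def Jmap (ψ : C ⊗[k] P →ₗ[k] P ⊗[k] C) :
    (P ⊗[k] C) ⊗[k] (P ⊗[k] P) →ₗ[k] (P ⊗[k] P) ⊗[k] C :=
  M3 ∘ₗ (lTensor P (Xi ψ)) ∘ₗ (TensorProduct.assoc k P C (P ⊗[k] P)).toLinearMap

def Kc (ψ : C ⊗[k] P →ₗ[k] P ⊗[k] C) :
    (P ⊗[k] C) ⊗[k] P →ₗ[k] (P ⊗[k] P) ⊗[k] C :=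
  (TensorProduct.assoc k P P C).symm.toLinearMap
    ∘ₗ (lTensor P ψ)
    ∘ₗ (TensorProduct.assoc k P C P).toLinearMap

variable (δ : P →ₗ[k] P ⊗[k] C) (ψ : C ⊗[k] P →ₗ[k] P ⊗[k] C) (ω : C →ₗ[k] P ⊗[k] P)

lemma M3_tmul (p : P) (Z : (P ⊗[k] P) ⊗[k] C) : M3 (p ⊗ₜ[k] Z) = p • Z := by
  induction Z using TensorProduct.induction_on with
  | zero => simp
  | tmul y c =>
      simp only [M3, coe_comp, LinearEquiv.coe_coe, Function.comp_apply,
        TensorProduct.assoc_symm_tmul, rTensor_tmul, mulFst_tmul, TensorProduct.smul_tmul']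
  | add x y hx hy => simp only [tmul_add, map_add, hx, hy, smul_add]

lemma M3_smul (p : P) (w : P ⊗[k] ((P ⊗[k] P) ⊗[k] C)) : M3 (p • w) = p • M3 w := by
  induction w using TensorProduct.induction_on with
  | zero => simp
  | tmul q Z => rw [smul_tmul_left, M3_tmul, M3_tmul, mul_smul]
  | add x y hx hy => simp only [smul_add, map_add, hx, hy]

lemma Jmap_tmul (p : P) (c : C) (Y : P ⊗[k] P) :
    Jmap ψ ((p ⊗ₜ[k] c) ⊗ₜ[k] Y) = p • Xi ψ (c ⊗ₜ[k] Y) := by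
  simp only [Jmap, coe_comp, LinearEquiv.coe_coe, Function.comp_apply,
    TensorProduct.assoc_tmul, lTensor_tmul, M3_tmul]

lemma assoc_symm_mul_smul (p u : P) (w : P ⊗[k] C) :
    (TensorProduct.assoc k P P C).symm ((p * u) ⊗ₜ[k] w)
      = p • (TensorProduct.assoc k P P C).symm (u ⊗ₜ[k] w) := by
  induction w using TensorProduct.induction_on with
  | zero => simp
  | tmul z c =>
      simp only [TensorProduct.assoc_symm_tmul, TensorProduct.smul_tmul', smul_tmul_left,
        smul_eq_mul]
  | add x y hx hy => simp only [tmul_add, map_add, hx, hy, smul_add]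

lemma Kc_smul (p : P) (s : P ⊗[k] C) (b : P) :
    Kc ψ ((p • s) ⊗ₜ[k] b) = p • Kc ψ (s ⊗ₜ[k] b) := by
  induction s using TensorProduct.induction_on with
  | zero => simp
  | tmul u e =>
      rw [smul_tmul_left]
      simp only [Kc, coe_comp, LinearEquiv.coe_coe, Function.comp_apply,
        TensorProduct.assoc_tmul, lTensor_tmul]
      exact assoc_symm_mul_smul p u _
  | add x y hx hy =>
      simp only [smul_add, add_tmul, map_add, hx, hy]

lemma deltaPP_tmul (a b : P) :
    deltaPP δ ψ (a ⊗ₜ[k] b) = Kc ψ ((δ a) ⊗ₜ[k] b) := by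
  simp only [deltaPP, Kc, coe_comp, LinearEquiv.coe_coe, Function.comp_apply, rTensor_tmul]

lemma Xi_tmul3 (c : C) (a b : P) :
    Xi ψ (c ⊗ₜ[k] (a ⊗ₜ[k] b)) = Kc ψ ((ψ (c ⊗ₜ[k] a)) ⊗ₜ[k] b) := by
  simp only [Xi, Kc, coe_comp, LinearEquiv.coe_coe, Function.comp_apply,
    TensorProduct.assoc_symm_tmul, rTensor_tmul]

lemma hL1 (hent : IsEntwinedOn δ ψ) (q : P) (y : P ⊗[k] P) :
    deltaPP δ ψ (q • y) = Jmap ψ ((δ q) ⊗ₜ[k] y) := by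
  induction y using TensorProduct.induction_on with
  | zero => simp
  | tmul a b =>
      rw [smul_tmul_left, deltaPP_tmul, hent q a]
      generalize (δ q) = t
      induction t using TensorProduct.induction_on with
      | zero => simp
      | tmul p c =>
          simp only [coe_comp, LinearEquiv.coe_coe, Function.comp_apply,
            TensorProduct.assoc_tmul, lTensor_tmul]
          rw [rmul_assoc_symm' p (ψ (c ⊗ₜ[k] a)), Kc_smul, Jmap_tmul, Xi_tmul3]
      | add x y hx hy =>
          simp only [map_add, add_tmul, hx, hy]
  | add x y hx hy =>
      simp only [smul_add, map_add, tmul_add, hx, hy]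

lemma hL1map (hent : IsEntwinedOn δ ψ) :
    deltaPP δ ψ ∘ₗ (mulFst : P ⊗[k] (P ⊗[k] P) →ₗ[k] P ⊗[k] P)
      = Jmap ψ ∘ₗ rTensor (P ⊗[k] P) δ := by
  apply TensorProduct.ext'
  intro q y
  simp only [coe_comp, Function.comp_apply, mulFst_tmul, rTensor_tmul]
  exact hL1 δ ψ hent q y

lemma transform_J (f : C →ₗ[k] P ⊗[k] P) (X : P ⊗[k] (C ⊗[k] C)) :
    Jmap ψ ((lTensor (P ⊗[k] C) f) ((TensorProduct.assoc k P C C).symm X))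
      = M3 ((lTensor P ((Xi ψ) ∘ₗ (lTensor C f))) X) := by
  induction X using TensorProduct.induction_on with
  | zero => simp
  | tmul p Y =>
      induction Y using TensorProduct.induction_on with
      | zero => simp
      | tmul c c' =>
          simp only [TensorProduct.assoc_symm_tmul, lTensor_tmul, Jmap_tmul,
            coe_comp, Function.comp_apply, M3_tmul]
      | add x y hx hy => simp only [tmul_add, map_add, hx, hy]
  | add x y hx hy => simp only [map_add, hx, hy]

lemma transform_rT (X : P ⊗[k] (C ⊗[k] C)) :
    rTensor C ((mulFst : P ⊗[k] (P ⊗[k] P) →ₗ[k] P ⊗[k] P) ∘ₗ lTensor P ω)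
        ((TensorProduct.assoc k P C C).symm X)
      = M3 ((lTensor P (rTensor C ω)) X) := by
  induction X using TensorProduct.induction_on with
  | zero => simp
  | tmul p Y =>
      induction Y using TensorProduct.induction_on with
      | zero => simp
      | tmul c c' =>
          simp only [TensorProduct.assoc_symm_tmul, lTensor_tmul, rTensor_tmul,
            coe_comp, Function.comp_apply, M3_tmul, mulFst_tmul, TensorProduct.smul_tmul']
      | add x y hx hy => simp only [tmul_add, map_add, hx, hy]
  | add x y hx hy => simp only [map_add, hx, hy]

end Aux3
section Aux4
set_option linter.unusedSectionVars false

variable (δ : P →ₗ[k] P ⊗[k] C) (ψ : C ⊗[k] P →ₗ[k] P ⊗[k] C) (ω : C →ₗ[k] P ⊗[k] P)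

lemma rT_lT_comm (x : P ⊗[k] C) :
    rTensor (P ⊗[k] P) δ (lTensor P ω x) = lTensor (P ⊗[k] C) ω (rTensor C δ x) := by
  induction x using TensorProduct.induction_on with
  | zero => simp
  | tmul p c => simp only [lTensor_tmul, rTensor_tmul]
  | add x y hx hy => simp only [map_add, hx, hy]

lemma colin_lhs
    (hδ2 : ∀ p : P, (rTensor C δ) (δ p)
      = (TensorProduct.assoc k P C C).symm
          ((lTensor P (Coalgebra.comul : C →ₗ[k] C ⊗[k] C)) (δ p)))
    (hent : IsEntwinedOn δ ψ) (p : P) :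
    deltaPP δ ψ (mulFst (lTensor P ω (δ p)))
      = M3 ((lTensor P ((Xi ψ) ∘ₗ (lTensor C ω)
            ∘ₗ (Coalgebra.comul : C →ₗ[k] C ⊗[k] C))) (δ p)) := by
  have h1 := LinearMap.congr_fun (hL1map δ ψ hent) (lTensor P ω (δ p))
  simp only [coe_comp, Function.comp_apply] at h1
  rw [h1, rT_lT_comm, hδ2, transform_J]
  simp only [lTensor_comp, coe_comp, Function.comp_apply]

lemma colin_rhs
    (hδ2 : ∀ p : P, (rTensor C δ) (δ p)
      = (TensorProduct.assoc k P C C).symm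
          ((lTensor P (Coalgebra.comul : C →ₗ[k] C ⊗[k] C)) (δ p)))
    (p : P) :
    rTensor C ((mulFst : P ⊗[k] (P ⊗[k] P) →ₗ[k] P ⊗[k] P) ∘ₗ lTensor P ω ∘ₗ δ) (δ p)
      = M3 ((lTensor P ((rTensor C ω)
            ∘ₗ (Coalgebra.comul : C →ₗ[k] C ⊗[k] C))) (δ p)) := by
  rw [show (mulFst : P ⊗[k] (P ⊗[k] P) →ₗ[k] P ⊗[k] P) ∘ₗ lTensor P ω ∘ₗ δ
      = ((mulFst : P ⊗[k] (P ⊗[k] P) →ₗ[k] P ⊗[k] P) ∘ₗ lTensor P ω) ∘ₗ δ from rfl,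
    rTensor_comp, coe_comp, Function.comp_apply, hδ2, transform_rT]
  simp only [lTensor_comp, coe_comp, Function.comp_apply]

lemma extract (A B : C →ₗ[k] (P ⊗[k] P) ⊗[k] C)
    (h : ∀ p : P, M3 ((lTensor P A) (δ p)) = M3 ((lTensor P B) (δ p)))
    (c : C) (t : P ⊗[k] P) (ht : canLift δ t = (1:P) ⊗ₜ[k] c) :
    A c = B c := by
  have hE : ∀ z : P ⊗[k] P,
      M3 ((lTensor P A) (canLift δ z)) = M3 ((lTensor P B) (canLift δ z)) := by
    intro z
    induction z using TensorProduct.induction_on with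
    | zero => simp
    | tmul u v => rw [canLift_tmul, lTensor_smul', lTensor_smul', M3_smul, M3_smul, h v]
    | add x y hx hy => simp only [map_add, hx, hy]
  have h2 := hE t
  rw [ht] at h2
  simpa only [lTensor_tmul, M3_tmul, one_smul] using h2

/-- `Θ_G : P ⊗ P → P ⊗ P`, `u ⊗ v ↦ u • G v`. -/
def Theta (G : P →ₗ[k] P ⊗[k] P) : P ⊗[k] P →ₗ[k] P ⊗[k] P :=
  mulFst ∘ₗ lTensor P G

lemma Theta_tmul (G : P →ₗ[k] P ⊗[k] P) (u v : P) :
    Theta G (u ⊗ₜ[k] v) = u • G v := by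
  simp only [Theta, coe_comp, Function.comp_apply, lTensor_tmul, mulFst_tmul]

lemma Theta_smul (G : P →ₗ[k] P ⊗[k] P) (p : P) (z : P ⊗[k] P) :
    Theta G (p • z) = p • Theta G z := by
  simp only [Theta, coe_comp, Function.comp_apply, lTensor_smul', mulFst_smul]

end Aux4
section Aux5
set_option linter.unusedSectionVars false

variable (δ : P →ₗ[k] P ⊗[k] C) (ψ : C ⊗[k] P →ₗ[k] P ⊗[k] C) (ω : C →ₗ[k] P ⊗[k] P)
variable (Pr : ↥(univForms (k := k) (P := P)) →ₗ[k] ↥(univForms (k := k) (P := P)))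

lemma dmap_apply (p : P) : dmap (k := k) (P := P) p = 1 ⊗ₜ[k] p - p ⊗ₜ[k] 1 := rfl

lemma dOmega_coe (p : P) :
    ((dOmega (k := k) (P := P) p : ↥(univForms (k := k) (P := P))) : P ⊗[k] P)
      = dmap (k := k) (P := P) p := rfl

lemma mul'_dmap (p : P) : LinearMap.mul' k P (dmap (k := k) (P := P) p) = 0 := by
  simp [dmap_apply]

lemma smul_dmap_mem (b p' : P) :
    b • dmap (k := k) (P := P) p' ∈ univForms (k := k) (P := P) := by
  rw [univForms, LinearMap.mem_ker, mul'_smul, mul'_dmap, mul_zero]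

/-- Shorthand: the map `Pr ∘ d` as a map `P → P ⊗ P`. -/
abbrev Gmap : P →ₗ[k] P ⊗[k] P :=
  (univForms (k := k) (P := P)).subtype ∘ₗ Pr ∘ₗ dOmega

lemma G_mul (hPr : IsConnection δ ψ Pr) {b : P} (hb : b ∈ coinv δ) (p' : P) :
    Gmap Pr (b * p') = b • Gmap Pr p' := by
  have he_mem : (1 * b) ⊗ₜ[k] p' - 1 ⊗ₜ[k] (b * p') ∈ univForms (k := k) (P := P) := by
    simp [univForms, LinearMap.mem_ker, mul_assoc]
  have he_gal : (1 * b) ⊗ₜ[k] p' - (1:P) ⊗ₜ[k] (b * p') ∈ galRel δ :=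
    Submodule.subset_span ⟨1, b, p', hb, rfl⟩
  have hsplit : dOmega (b * p')
      = (⟨b • dmap p', smul_dmap_mem b p'⟩ : ↥(univForms (k := k) (P := P)))
        - ⟨(1 * b) ⊗ₜ[k] p' - 1 ⊗ₜ[k] (b * p'), he_mem⟩ := by
    apply Subtype.ext
    push_cast [dOmega_coe]
    rw [dmap_apply, dmap_apply, smul_sub, smul_tmul_left, smul_tmul_left,
      mul_one, one_mul]
    abel
  have h2 : ((Pr ⟨b • dmap p', smul_dmap_mem b p'⟩ :
        ↥(univForms (k := k) (P := P))) : P ⊗[k] P)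
      = b • ((Pr (dOmega p') : ↥(univForms (k := k) (P := P))) : P ⊗[k] P) :=
    hPr.1 b (dOmega p') _ rfl
  have h3 : Pr ⟨(1 * b) ⊗ₜ[k] p' - 1 ⊗ₜ[k] (b * p'), he_mem⟩ = 0 :=
    (hPr.2.2.1 _).mpr he_gal
  show ((Pr (dOmega (b * p')) : ↥(univForms (k := k) (P := P))) : P ⊗[k] P) = _
  rw [hsplit, map_sub, h3, sub_zero, h2]
  rfl

lemma Theta_vanish (hGal : IsCGalois δ) (hPr : IsConnection δ ψ Pr) :
    ∀ z ∈ galRel δ, Theta (Gmap Pr) z = 0 := by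
  intro z hz
  refine Submodule.span_induction (p := fun x _ => Theta (Gmap Pr) x = 0) ?_ ?_ ?_ ?_ hz
  · rintro x ⟨p, b, p', hb, rfl⟩
    rw [map_sub, Theta_tmul, Theta_tmul, G_mul δ ψ Pr hPr hb, mul_smul, sub_self]
  · simp
  · intro x y _ _ hx hy; rw [map_add, hx, hy, add_zero]
  · intro a x _ hx; rw [map_smul, hx, smul_zero]

lemma Theta_welldef (hGal : IsCGalois δ) (hPr : IsConnection δ ψ Pr)
    {z z' : P ⊗[k] P} (h : canLift δ z = canLift δ z') :
    Theta (Gmap Pr) z = Theta (Gmap Pr) z' := by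
  have hker : z - z' ∈ galRel δ := by
    rw [← hGal.2, LinearMap.mem_ker, map_sub, h, sub_self]
  have := Theta_vanish δ ψ Pr hGal hPr _ hker
  rw [map_sub, sub_eq_zero] at this
  exact this

lemma canLift_Pr (hGal : IsCGalois δ) (hPr : IsConnection δ ψ Pr)
    (x : ↥(univForms (k := k) (P := P))) :
    canLift δ ((Pr x : ↥(univForms (k := k) (P := P))) : P ⊗[k] P)
      = canLift δ (x : P ⊗[k] P) := by
  have hid : Pr (Pr x) = Pr x := by
    have := LinearMap.congr_fun hPr.2.1 x
    simpa using this
  have h0 : Pr (Pr x - x) = 0 := by rw [map_sub, hid, sub_self]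
  have hgal : ((Pr x - x : ↥(univForms (k := k) (P := P))) : P ⊗[k] P) ∈ galRel δ :=
    (hPr.2.2.1 _).mp h0
  rw [← hGal.2, LinearMap.mem_ker] at hgal
  rw [Submodule.coe_sub, map_sub, sub_eq_zero] at hgal
  exact hgal

lemma canLift_Theta (hGal : IsCGalois δ) (hPr : IsConnection δ ψ Pr) (z : P ⊗[k] P) :
    canLift δ (Theta (Gmap Pr) z) = canLift δ z - (LinearMap.mul' k P z) • δ 1 := by
  induction z using TensorProduct.induction_on with
  | zero => simp
  | tmul u v =>
      rw [Theta_tmul, canLift_smul]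
      have hG : canLift δ (Gmap Pr v) = δ v - v • δ 1 := by
        show canLift δ ((Pr (dOmega v) : ↥(univForms (k := k) (P := P))) : P ⊗[k] P) = _
        rw [canLift_Pr δ ψ Pr hGal hPr, dOmega_coe, dmap_apply, map_sub,
          canLift_tmul, canLift_tmul, one_smul]
      rw [hG, smul_sub, canLift_tmul, LinearMap.mul'_apply, mul_smul]
  | add x y hx hy =>
      rw [map_add, map_add, hx, hy, map_add, map_add, add_smul]; abel

lemma mul'_Theta (z : P ⊗[k] P) : LinearMap.mul' k P (Theta (Gmap Pr) z) = 0 := by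
  induction z using TensorProduct.induction_on with
  | zero => simp
  | tmul u v =>
      rw [Theta_tmul, mul'_smul]
      have : Gmap Pr v ∈ univForms (k := k) (P := P) := (Pr (dOmega v)).2
      rw [LinearMap.mem_ker.mp this, mul_zero]
  | add x y hx hy => rw [map_add, map_add, hx, hy, add_zero]

lemma exists_section (hGal : IsCGalois δ) :
    ∃ ρ : P ⊗[k] C →ₗ[k] P ⊗[k] P, ∀ t, canLift δ (ρ t) = t := by
  obtain ⟨g, hg⟩ := (canLift δ).exists_rightInverse_of_surjective
    (LinearMap.range_eq_top.mpr hGal.1)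
  exact ⟨g, fun t => LinearMap.congr_fun hg t⟩

end Aux5
section Aux6
set_option linter.unusedSectionVars false

variable (δ : P →ₗ[k] P ⊗[k] C) (ψ : C ⊗[k] P →ₗ[k] P ⊗[k] C) (ω : C →ₗ[k] P ⊗[k] P)
variable (Pr : ↥(univForms (k := k) (P := P)) →ₗ[k] ↥(univForms (k := k) (P := P)))

lemma piOf_dmap (hω1 : mulFst ((lTensor P ω) (δ 1)) = 0) (p : P) :
    piOf δ ω (dmap (k := k) (P := P) p) = mulFst ((lTensor P ω) (δ p)) := by
  rw [dmap_apply, map_sub, piOf_apply, piOf_apply, canLift_tmul, canLift_tmul, one_smul,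
    lTensor_smul', mulFst_smul, hω1, smul_zero, sub_zero]

lemma Theta_dmap (z : P ⊗[k] P) :
    Theta (dmap (k := k) (P := P)) z = z - (LinearMap.mul' k P z) ⊗ₜ[k] 1 := by
  induction z using TensorProduct.induction_on with
  | zero => simp
  | tmul u v =>
      rw [Theta_tmul, dmap_apply, smul_sub, smul_tmul_left, smul_tmul_left,
        mul_one, LinearMap.mul'_apply]
  | add x y hx hy => rw [map_add, hx, hy, map_add, add_tmul]; abel

lemma Theta_dmap_mem (z : P ⊗[k] P) :
    Theta (dmap (k := k) (P := P)) z ∈ univForms (k := k) (P := P) := by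
  rw [univForms, LinearMap.mem_ker, Theta_dmap, map_sub, LinearMap.mul'_apply,
    mul_one, sub_self]

lemma Theta_Gmap_coe (hPr : IsConnection δ ψ Pr) (x : ↥(univForms (k := k) (P := P))) :
    Theta (Gmap Pr) (x : P ⊗[k] P) = ((Pr x : ↥(univForms (k := k) (P := P))) : P ⊗[k] P) := by
  set cd : P ⊗[k] P →ₗ[k] ↥(univForms (k := k) (P := P)) :=
    LinearMap.codRestrict (univForms (k := k) (P := P)) (Theta (dmap (k := k) (P := P)))
      (Theta_dmap_mem) with hcd
  have hmap : Theta (Gmap Pr)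
      = (univForms (k := k) (P := P)).subtype ∘ₗ Pr ∘ₗ cd := by
    apply TensorProduct.ext'
    intro u v
    have hy : ((cd (u ⊗ₜ[k] v) : ↥(univForms (k := k) (P := P))) : P ⊗[k] P)
        = u • ((dOmega v : ↥(univForms (k := k) (P := P))) : P ⊗[k] P) := by
      show Theta (dmap (k := k) (P := P)) (u ⊗ₜ[k] v) = _
      rw [Theta_tmul, dOmega_coe]
    have := hPr.1 u (dOmega v) (cd (u ⊗ₜ[k] v)) hy
    simp only [coe_comp, Function.comp_apply, Submodule.coe_subtype]
    rw [this, Theta_tmul]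
    rfl
  have hcdx : cd (x : P ⊗[k] P) = x := by
    apply Subtype.ext
    show Theta (dmap (k := k) (P := P)) (x : P ⊗[k] P) = (x : P ⊗[k] P)
    rw [Theta_dmap, LinearMap.mem_ker.mp x.2, TensorProduct.zero_tmul, sub_zero]
  rw [hmap]
  simp only [coe_comp, Function.comp_apply, Submodule.coe_subtype, hcdx]

end Aux6
theorem connections_correspond_to_connection_forms
    (δ : P →ₗ[k] P ⊗[k] C) (hδ : IsCoaction δ) (hGal : IsCGalois δ)
    (ψ : C ⊗[k] P →ₗ[k] P ⊗[k] C) (hψ : IsEntwining ψ) (hent : IsEntwinedOn δ ψ)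
    (hcan : ∀ (c : C) (p : P) (t : P ⊗[k] P),
        canLift δ t = (1 : P) ⊗ₜ[k] c →
        ψ (c ⊗ₜ[k] p) = canLift δ (t * ((1 : P) ⊗ₜ[k] p))) :
    -- ω ↦ Pr^ω produces connections:
    (∀ ω : C →ₗ[k] P ⊗[k] P, IsConnectionForm δ ψ ω →
        ∃ Pr, IsConnection δ ψ Pr ∧
          ∀ x : ↥(univForms (k := k) (P := P)),
            ((Pr x : ↥(univForms (k := k) (P := P))) : P ⊗[k] P)
              = piOf δ ω (x : P ⊗[k] P)) ∧
    -- Pr ↦ ω_Pr produces connection forms: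
    (∀ Pr, IsConnection δ ψ Pr →
        ∃ ω : C →ₗ[k] P ⊗[k] P, IsConnectionForm δ ψ ω ∧
          ∀ (c : C) (t : P ⊗[k] P), canLift δ t = (1 : P) ⊗ₜ[k] c →
            ω c = mulFst
              ((lTensor P ((univForms (k := k) (P := P)).subtype ∘ₗ Pr ∘ₗ dOmega)) t)) ∧
    -- and the two assignments are mutually inverse:
    (∀ Pr (ω : C →ₗ[k] P ⊗[k] P),
        IsConnection δ ψ Pr → IsConnectionForm δ ψ ω →
        ((∀ (c : C) (t : P ⊗[k] P), canLift δ t = (1 : P) ⊗ₜ[k] c →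
            ω c = mulFst
              ((lTensor P ((univForms (k := k) (P := P)).subtype ∘ₗ Pr ∘ₗ dOmega)) t))
          ↔
         (∀ x : ↥(univForms (k := k) (P := P)),
            ((Pr x : ↥(univForms (k := k) (P := P))) : P ⊗[k] P)
              = piOf δ ω (x : P ⊗[k] P)))) := by
  obtain ⟨hδ1, hδ2⟩ := hδ
  obtain ⟨ρ, hρ⟩ := exists_section δ hGal
  refine ⟨?_, ?_, ?_⟩
  · -- ω ↦ Pr^ω produces connections
    intro ω hω
    obtain ⟨hω0, hω1, hω2, hω3⟩ := hω
    have hmem : ∀ x : ↥(univForms (k := k) (P := P)),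
        piOf δ ω (x : P ⊗[k] P) ∈ univForms (k := k) (P := P) := by
      intro x
      exact LinearMap.mem_ker.mpr (mul'_piOf δ ω hω0 _)
    set Pr : ↥(univForms (k := k) (P := P)) →ₗ[k] ↥(univForms (k := k) (P := P)) :=
      LinearMap.codRestrict (univForms (k := k) (P := P))
        (piOf δ ω ∘ₗ (univForms (k := k) (P := P)).subtype) hmem with hPrdef
    have hcoe : ∀ x : ↥(univForms (k := k) (P := P)),
        ((Pr x : ↥(univForms (k := k) (P := P))) : P ⊗[k] P)
          = piOf δ ω (x : P ⊗[k] P) := fun x => rfl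
    refine ⟨Pr, ⟨?_, ?_, ?_, ?_⟩, hcoe⟩
    · intro p x y h
      rw [hcoe, hcoe, h, piOf_smul]
    · apply LinearMap.ext
      intro x
      apply Subtype.ext
      rw [LinearMap.comp_apply, hcoe, hcoe]
      have hμ : LinearMap.mul' k P (x : P ⊗[k] P) = 0 := LinearMap.mem_ker.mp x.2
      have hc := canLift_piOf δ ω hδ1 hω2 (x : P ⊗[k] P)
      rw [hμ, zero_smul, sub_zero] at hc
      rw [piOf_apply δ ω (piOf δ ω (x : P ⊗[k] P)), hc]
      rfl
    · intro x
      constructor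
      · intro h0
        have hz : piOf δ ω (x : P ⊗[k] P) = 0 := by
          rw [← hcoe, h0]; rfl
        have hc := canLift_piOf δ ω hδ1 hω2 (x : P ⊗[k] P)
        rw [hz, map_zero, LinearMap.mem_ker.mp x.2, zero_smul, sub_zero] at hc
        rw [← hGal.2, LinearMap.mem_ker]
        exact hc.symm
      · intro hgal
        apply Subtype.ext
        rw [hcoe]
        have : canLift δ (x : P ⊗[k] P) = 0 := by
          rw [← LinearMap.mem_ker, hGal.2]; exact hgal
        rw [piOf_apply, this, map_zero, map_zero]
        rfl
    · intro p
      have hGeq : (univForms (k := k) (P := P)).subtype ∘ₗ Pr ∘ₗ dOmega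
          = (mulFst : P ⊗[k] (P ⊗[k] P) →ₗ[k] P ⊗[k] P) ∘ₗ lTensor P ω ∘ₗ δ := by
        apply LinearMap.ext
        intro q
        show piOf δ ω (dmap (k := k) (P := P) q) = _
        exact piOf_dmap δ ω hω1 q
      have hL : ((Pr (dOmega p) : ↥(univForms (k := k) (P := P))) : P ⊗[k] P)
          = mulFst ((lTensor P ω) (δ p)) := by
        rw [hcoe]
        show piOf δ ω (dmap (k := k) (P := P) p) = _
        exact piOf_dmap δ ω hω1 p
      rw [hL, hGeq, colin_lhs δ ψ ω hδ2 hent p, colin_rhs δ ω hδ2 p]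
      have hAB : (Xi ψ) ∘ₗ (lTensor C ω) ∘ₗ (Coalgebra.comul : C →ₗ[k] C ⊗[k] C)
          = (rTensor C ω) ∘ₗ (Coalgebra.comul : C →ₗ[k] C ⊗[k] C) := hω3
      rw [hAB]
  · -- Pr ↦ ω_Pr produces connection forms
    intro Pr hPr
    set ω : C →ₗ[k] P ⊗[k] P :=
      Theta (Gmap Pr) ∘ₗ ρ ∘ₗ (TensorProduct.mk k P C 1) with hωdef
    have hωapp : ∀ c : C, ω c = Theta (Gmap Pr) (ρ ((1:P) ⊗ₜ[k] c)) := fun c => rfl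
    have hspec : ∀ (c : C) (t : P ⊗[k] P), canLift δ t = (1:P) ⊗ₜ[k] c →
        ω c = Theta (Gmap Pr) t := by
      intro c t ht
      rw [hωapp]
      exact Theta_welldef δ ψ Pr hGal hPr (by rw [hρ, ht])
    have hT : ∀ t : P ⊗[k] C, mulFst ((lTensor P ω) t) = Theta (Gmap Pr) (ρ t) := by
      intro t
      induction t using TensorProduct.induction_on with
      | zero => simp
      | tmul p c =>
          rw [lTensor_tmul, mulFst_tmul, hωapp, ← Theta_smul]
          apply Theta_welldef δ ψ Pr hGal hPr
          rw [canLift_smul, hρ, hρ, smul_tmul_left, mul_one]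
      | add x y hx hy => simp only [map_add, hx, hy]
    refine ⟨ω, ⟨?_, ?_, ?_, ?_⟩, fun c t ht => hspec c t ht⟩
    · intro c
      rw [hωapp]
      exact LinearMap.mem_ker.mpr (mul'_Theta Pr _)
    · rw [hT]
      have h11 : Theta (Gmap Pr) (ρ (δ 1)) = Theta (Gmap Pr) ((1:P) ⊗ₜ[k] (1:P)) :=
        Theta_welldef δ ψ Pr hGal hPr (by rw [hρ, canLift_tmul, one_smul])
      rw [h11, Theta_tmul, one_smul]
      have h1 : dOmega (k := k) (P := P) (1:P) = 0 := by
        apply Subtype.ext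
        rw [dOmega_coe, dmap_apply, sub_self]
        rfl
      show ((Pr (dOmega 1) : ↥(univForms (k := k) (P := P))) : P ⊗[k] P) = 0
      rw [h1, map_zero]
      rfl
    · intro c
      rw [hωapp, canLift_Theta δ ψ Pr hGal hPr, hρ]
      have hμ : LinearMap.mul' k P (ρ ((1:P) ⊗ₜ[k] c))
          = ((Coalgebra.counit : C →ₗ[k] k) c) • (1:P) := by
        rw [← counit_canLift δ hδ1, hρ, lTensor_tmul, TensorProduct.rid_tmul]
      rw [hμ, smul_assoc, one_smul]
    · have hGeq2 : (Gmap Pr : P →ₗ[k] P ⊗[k] P)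
          = (mulFst : P ⊗[k] (P ⊗[k] P) →ₗ[k] P ⊗[k] P) ∘ₗ lTensor P ω ∘ₗ δ := by
        apply LinearMap.ext
        intro q
        have := hT (δ q)
        rw [Theta_welldef δ ψ Pr hGal hPr (z := ρ (δ q)) (z' := (1:P) ⊗ₜ[k] q)
          (by rw [hρ, canLift_tmul, one_smul]), Theta_tmul, one_smul] at this
        simp only [coe_comp, Function.comp_apply]
        exact this.symm
      have hM : ∀ p : P,
          M3 ((lTensor P ((Xi ψ) ∘ₗ (lTensor C ω)
              ∘ₗ (Coalgebra.comul : C →ₗ[k] C ⊗[k] C))) (δ p))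
            = M3 ((lTensor P ((rTensor C ω)
              ∘ₗ (Coalgebra.comul : C →ₗ[k] C ⊗[k] C))) (δ p)) := by
        intro p
        rw [← colin_lhs δ ψ ω hδ2 hent p, ← colin_rhs δ ω hδ2 p, ← hGeq2]
        have hl : mulFst ((lTensor P ω) (δ p)) = Gmap Pr p := by
          rw [hGeq2]; rfl
        rw [hl]
        exact hPr.2.2.2 p
      apply LinearMap.ext
      intro c
      exact extract δ ((Xi ψ) ∘ₗ (lTensor C ω) ∘ₗ (Coalgebra.comul : C →ₗ[k] C ⊗[k] C))
        ((rTensor C ω) ∘ₗ (Coalgebra.comul : C →ₗ[k] C ⊗[k] C)) hM c (ρ ((1:P) ⊗ₜ[k] c)) (hρ _)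
  · -- mutually inverse
    intro Pr ω hPr hω
    constructor
    · intro hchar x
      have hωρ : ∀ c : C, ω c = Theta (Gmap Pr) (ρ ((1:P) ⊗ₜ[k] c)) :=
        fun c => hchar c _ (hρ _)
      have hT2 : ∀ t : P ⊗[k] C, mulFst ((lTensor P ω) t) = Theta (Gmap Pr) (ρ t) := by
        intro t
        induction t using TensorProduct.induction_on with
        | zero => simp
        | tmul p c =>
            rw [lTensor_tmul, mulFst_tmul, hωρ, ← Theta_smul]
            apply Theta_welldef δ ψ Pr hGal hPr
            rw [canLift_smul, hρ, hρ, smul_tmul_left, mul_one]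
        | add x y hx hy => simp only [map_add, hx, hy]
      have h1 : piOf δ ω (x : P ⊗[k] P) = Theta (Gmap Pr) (x : P ⊗[k] P) := by
        rw [piOf_apply, hT2]
        exact Theta_welldef δ ψ Pr hGal hPr (hρ _)
      rw [h1]
      exact (Theta_Gmap_coe δ ψ Pr hPr x).symm
    · intro hpi c t ht
      have hGeq3 : ∀ q : P, Gmap Pr q = mulFst ((lTensor P ω) (δ q)) := by
        intro q
        have h := hpi (dOmega q)
        rw [dOmega_coe] at h  -- coercion
        calc Gmap Pr q = piOf δ ω (dmap (k := k) (P := P) q) := h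
        _ = mulFst ((lTensor P ω) (δ q)) := piOf_dmap δ ω hω.2.1 q
      have hTh : ∀ z : P ⊗[k] P,
          Theta (Gmap Pr) z = mulFst ((lTensor P ω) (canLift δ z)) := by
        intro z
        induction z using TensorProduct.induction_on with
        | zero => simp
        | tmul u v =>
            rw [Theta_tmul, hGeq3, canLift_tmul, lTensor_smul', mulFst_smul]
        | add x y hx hy => simp only [map_add, hx, hy]
      show ω c = Theta (Gmap Pr) t
      rw [hTh, ht, lTensor_tmul, mulFst_tmul, one_smul]

end CGal
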